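/- Let Ω be an infinite set. Then every countable subset of the symmetric inverse semigroup I_Ω is contained in a 4-generated subsemigroup of I_Ω; that is, for every countable set A of partial bijections of Ω there exist partial bijections f, g, h, k of Ω such that every element of A belongs to the subsemigroup of I_Ω generated by {f, g, h, k}. -/

import Mathlib

/-- A partial function `Ω →. Ω` is a partial bijection if it is injective on its domain. -/
def IsPartialBij {Ω : Type*} (f : Ω →. Ω) : Prop :=
  ∀ ⦃x y z : Ω⦄, z ∈ f x → z ∈ f y → x = y

/-- The symmetric inverse semigroup `I_Ω`: the type of all partial bijections of `Ω`. -/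
def PartialBij (Ω : Type*) : Type _ :=
  {f : Ω →. Ω // IsPartialBij f}

/-- Composition of partial bijections, written left-to-right: `f * g` means apply `f` first,
then `g`. -/
instance (Ω : Type*) : Semigroup (PartialBij Ω) where
  mul f g := ⟨g.1.comp f.1, by
    intro x y z hx hy
    replace hx := Part.mem_bind_iff.mp (show z ∈ (f.1 x).bind g.1 from hx)
    replace hy := Part.mem_bind_iff.mp (show z ∈ (f.1 y).bind g.1 from hy)
    obtain ⟨u, hu, hzu⟩ := hx
    obtain ⟨v, hv, hzv⟩ := hy
    have huv : u = v := g.2 hzu hzv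
    subst huv
    exact f.2 hu hv⟩
  mul_assoc a b c := Subtype.ext (PFun.comp_assoc c.1 b.1 a.1).symm

/-!
Since `Ω` is infinite, `Ω ≃ Ω × ℤ`, which splits `Ω` into levels `Ω × {k}`, each a copy of `Ω`.
Enumerate the countable set as `a 0, a 1, …` and take as generators the map `t` of `Ω` onto
level `0`, the shift `s` from each level `k` to level `k + 1`, the map `v` that applies `a n` on
level `n ≥ 0` and moves the result to level `-(n + 1)`, and the map `q` of level `-1` back onto
`Ω`. Composing left to right, `a n = t sⁿ v sⁿ q`, where `t sⁿ = toLevel n` and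
`sⁿ q = fromLevel (-(n + 1))`.
-/

open Function

namespace PartialBij

variable {Ω : Type*}

theorem mul_apply (f g : PartialBij Ω) (x : Ω) : (f * g).1 x = (f.1 x).bind fun y => g.1 y := rfl

theorem ext {f g : PartialBij Ω} (h : ∀ x, f.1 x = g.1 x) : f = g := Subtype.ext (funext h)

def ofInjective (f : Ω → Ω) (hf : Injective f) : PartialBij Ω :=
  ⟨fun x => Part.some (f x), fun _ _ _ hx hy =>
    hf ((Part.mem_some_iff.mp hx).symm.trans (Part.mem_some_iff.mp hy))⟩

noncomputable def invOfInjective (f : Ω → Ω) (hf : Injective f) : PartialBij Ω :=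
  ⟨fun z => partialInv f z, fun x y _ hx hy =>
    injective_of_isPartialInv_right hf.isPartialInv x y _
      (Part.mem_coe.mp hx) (Part.mem_coe.mp hy)⟩

section Injective

variable {f g s : Ω → Ω} (hf : Injective f) (hg : Injective g) (hs : Injective s)

theorem ofInjective_apply (x : Ω) : (ofInjective f hf).1 x = Part.some (f x) := rfl

theorem mem_invOfInjective_apply {x z : Ω} : x ∈ (invOfInjective f hf).1 z ↔ f x = z :=
  Part.mem_coe.trans (hf.isPartialInv x z)

theorem invOfInjective_apply_self (x : Ω) : (invOfInjective f hf).1 (f x) = Part.some x :=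
  Part.eq_some_iff.mpr ((mem_invOfInjective_apply hf).mpr rfl)

theorem ofInjective_mul_ofInjective :
    ofInjective f hf * ofInjective g hg = ofInjective (g ∘ f) (hg.comp hf) :=
  ext fun x => Part.bind_some (f x) _

theorem ofInjective_mul_invOfInjective (hsg : s ∘ g = f) :
    ofInjective s hs * invOfInjective f hf = invOfInjective g hg := by
  refine ext fun z => Part.ext fun x => ?_
  rw [mul_apply, ofInjective_apply, Part.bind_some, mem_invOfInjective_apply,
    mem_invOfInjective_apply, ← hsg, comp_apply, hs.eq_iff]

end Injective

section Levels

variable (e : Ω ≃ Ω × ℤ)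

def levelEmb (k : ℤ) (x : Ω) : Ω := e.symm (x, k)

theorem levelEmb_inj {k l : ℤ} {x y : Ω} : levelEmb e k x = levelEmb e l y ↔ k = l ∧ x = y := by
  simp [levelEmb, and_comm]

theorem levelEmb_injective (k : ℤ) : Injective (levelEmb e k) :=
  fun _ _ h => ((levelEmb_inj e).mp h).2

theorem exists_levelEmb_eq (w : Ω) : ∃ k x, levelEmb e k x = w :=
  ⟨(e w).2, (e w).1, e.symm_apply_apply w⟩

def shiftEquiv : Ω ≃ Ω := (e.trans ((Equiv.refl Ω).prodCongr (Equiv.addRight 1))).trans e.symm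

theorem shiftEquiv_comp_levelEmb (k : ℤ) : shiftEquiv e ∘ levelEmb e k = levelEmb e (k + 1) := by
  funext x
  simp [shiftEquiv, levelEmb]

def toLevel (k : ℤ) : PartialBij Ω := ofInjective (levelEmb e k) (levelEmb_injective e k)

noncomputable def fromLevel (k : ℤ) : PartialBij Ω :=
  invOfInjective (levelEmb e k) (levelEmb_injective e k)

def shift : PartialBij Ω := ofInjective (shiftEquiv e) (shiftEquiv e).injective

theorem toLevel_mul_shift (k : ℤ) : toLevel e k * shift e = toLevel e (k + 1) := by
  simp only [toLevel, shift, ofInjective_mul_ofInjective, shiftEquiv_comp_levelEmb]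

theorem shift_mul_fromLevel (k : ℤ) : shift e * fromLevel e (k + 1) = fromLevel e k :=
  ofInjective_mul_invOfInjective _ _ _ (shiftEquiv_comp_levelEmb e k)

variable (a : ℕ → PartialBij Ω)

def encodeFun (z : Ω) : Part Ω :=
  match e z with
  | (x, (n : ℕ)) => ((a n).1 x).map (levelEmb e (Int.negSucc n))
  | (_, Int.negSucc _) => Part.none

theorem encodeFun_levelEmb_natCast (n : ℕ) (x : Ω) :
    encodeFun e a (levelEmb e n x) = ((a n).1 x).map (levelEmb e (Int.negSucc n)) := by
  simp [encodeFun, levelEmb]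

theorem encodeFun_levelEmb_negSucc (n : ℕ) (x : Ω) :
    encodeFun e a (levelEmb e (Int.negSucc n) x) = Part.none := by
  simp [encodeFun, levelEmb]

theorem isPartialBij_encodeFun : IsPartialBij (encodeFun e a) := by
  intro w₁ w₂ z hz₁ hz₂
  obtain ⟨k₁, x₁, rfl⟩ := exists_levelEmb_eq e w₁
  obtain ⟨k₂, x₂, rfl⟩ := exists_levelEmb_eq e w₂
  rcases k₁ with n₁ | n₁ <;> rcases k₂ with n₂ | n₂ <;>
    simp only [Int.ofNat_eq_natCast, encodeFun_levelEmb_natCast, encodeFun_levelEmb_negSucc,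
      Part.notMem_none, Part.mem_map_iff] at hz₁ hz₂
  obtain ⟨y₁, hy₁, rfl⟩ := hz₁
  obtain ⟨y₂, hy₂, hy⟩ := hz₂
  obtain ⟨hn, rfl⟩ := (levelEmb_inj e).mp hy
  cases Int.negSucc_inj.mp hn
  rw [(a n₁).2 hy₁ hy₂]

def encode : PartialBij Ω := ⟨encodeFun e a, isPartialBij_encodeFun e a⟩

theorem toLevel_mul_encode_mul_fromLevel (n : ℕ) :
    toLevel e n * encode e a * fromLevel e (Int.negSucc n) = a n := by
  refine ext fun x => ?_
  rw [mul_apply, mul_apply, toLevel, ofInjective_apply, Part.bind_some]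
  change (encodeFun e a (levelEmb e n x)).bind _ = _
  rw [encodeFun_levelEmb_natCast, Part.bind_map]
  simp only [fromLevel, invOfInjective_apply_self, Part.bind_some_right]

section Closure

variable {e} {S : Subsemigroup (PartialBij Ω)}

theorem toLevel_natCast_mem (hshift : shift e ∈ S) (h₀ : toLevel e 0 ∈ S) (n : ℕ) :
    toLevel e n ∈ S := by
  induction n with
  | zero => exact h₀
  | succ n ih => exact_mod_cast toLevel_mul_shift e n ▸ S.mul_mem ih hshift

theorem fromLevel_negSucc_mem (hshift : shift e ∈ S) (h₀ : fromLevel e (Int.negSucc 0) ∈ S)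
    (n : ℕ) :
    fromLevel e (Int.negSucc n) ∈ S := by
  induction n with
  | zero => exact h₀
  | succ n ih =>
    have := shift_mul_fromLevel e (Int.negSucc (n + 1))
    rw [show Int.negSucc (n + 1) + 1 = Int.negSucc n by omega] at this
    exact this ▸ S.mul_mem hshift ih

end Closure

theorem range_subset_closure :
    Set.range a ⊆
      Subsemigroup.closure {toLevel e 0, shift e, encode e a, fromLevel e (Int.negSucc 0)} := by
  have gens := Subsemigroup.subset_closure
    (s := {toLevel e 0, shift e, encode e a, fromLevel e (Int.negSucc 0)})
  simp only [Set.insert_subset_iff, Set.singleton_subset_iff, SetLike.mem_coe] at gens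
  obtain ⟨hto, hshift, hencode, hfrom⟩ := gens
  rintro _ ⟨n, rfl⟩
  rw [← toLevel_mul_encode_mul_fromLevel e a n]
  exact mul_mem (mul_mem (toLevel_natCast_mem hshift hto n) hencode)
    (fromLevel_negSucc_mem hshift hfrom n)

end Levels

end PartialBij

/-- Every countable subset of the symmetric inverse semigroup `I_Ω` on an infinite set `Ω`
is contained in a 4-generated subsemigroup of `I_Ω`. -/
theorem countable_subset_of_four_generated_subsemigroup_of_partialBij
    (Ω : Type*) [Infinite Ω] (A : Set (PartialBij Ω)) (hA : A.Countable) :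
    ∃ f g h k : PartialBij Ω,
      A ⊆ (Subsemigroup.closure {f, g, h, k} : Subsemigroup (PartialBij Ω)) := by
  obtain ⟨e⟩ : Nonempty (Ω ≃ Ω × ℤ) := Cardinal.eq.mp (by simp [Cardinal.mk_prod])
  have : Nonempty (PartialBij Ω) := ⟨PartialBij.ofInjective id injective_id⟩
  obtain ⟨a, hAa⟩ := Set.countable_iff_exists_subset_range.mp hA
  exact ⟨_, _, _, _, hAa.trans (PartialBij.range_subset_closure e a)⟩
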